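/- For a list x over {0,1}, let dup(x) denote the list obtained by inserting the symbol 1 immediately after every element of x (so dup(x) has length 2·|x|). Then for all binary lists x and y, the Levenshtein edit distance between dup(x) and dup(y) is at least the Levenshtein edit distance between x and y. -/

import Mathlib

/-- The costs of the edit operations (as in Mathlib's former `Levenshtein.Cost`). -/
structure Levenshtein.Cost (α β δ : Type*) where
  delete : α → δ
  insert : β → δ
  substitute : α → β → δ

/-- Unit costs (as in Mathlib's former `Levenshtein.defaultCost`). -/
def Levenshtein.defaultCost {α : Type*} [DecidableEq α] : Levenshtein.Cost α α ℕ where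
  delete _ := 1
  insert _ := 1
  substitute a b := if a = b then 0 else 1

/-- One step of the dynamic program (as in Mathlib's former `Levenshtein.impl`). -/
def Levenshtein.impl {α β δ : Type*} [AddZeroClass δ] [Min δ] (C : Levenshtein.Cost α β δ)
    (xs : List α) (y : β) (d : {r : List δ // 0 < r.length}) : {r : List δ // 0 < r.length} :=
  let ⟨ds, w⟩ := d
  xs.zip (ds.zip ds.tail) |>.foldr
    (init := ⟨[C.insert y + ds.getLast (List.length_pos_iff.mp w)], by simp⟩)
    (fun ⟨x, d₀, d₁⟩ ⟨r, w⟩ =>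
      ⟨min (C.delete x + r[0]) (min (C.insert y + d₀) (C.substitute x y + d₁)) :: r, by simp⟩)

/-- Edit distances of all suffixes (as in Mathlib's former `suffixLevenshtein`). -/
def suffixLevenshtein {α β δ : Type*} [AddZeroClass δ] [Min δ] (C : Levenshtein.Cost α β δ)
    (xs : List α) (ys : List β) : {r : List δ // 0 < r.length} :=
  ys.foldr
    (Levenshtein.impl C xs)
    (xs.foldr (init := ⟨[0], by simp⟩) (fun a ⟨r, w⟩ => ⟨(C.delete a + r[0]) :: r, by simp⟩))

/-- The Levenshtein distance (as in Mathlib's former `levenshtein`). -/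
def levenshtein {α β δ : Type*} [AddZeroClass δ] [Min δ] (C : Levenshtein.Cost α β δ)
    (xs : List α) (ys : List β) : δ :=
  let ⟨r, w⟩ := suffixLevenshtein C xs ys
  r[0]

/-!
Write `I x` for `x` with `c` inserted after every symbol. Running the edit-distance recursion on
`I x` and `I y` reaches, besides pairs `(I x, I y)`, the half-consumed pairs `(c :: I x, I y)`
and their mirror images. One proves simultaneously, by induction on `|x| + |y|`, that
`d(x, y) ≤ d(I x, I y)` and that `d(c :: I x, I y)` dominates both `d(x, y)` and `d(c :: x, y)`:
each branch of the recursion on the padded side is matched by a branch on the unpadded side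
of no larger cost. The pairs `(c :: I x, c :: I y)` are reduced to `(I x, I y)`, since a common
first symbol never changes the unit-cost edit distance.
-/

namespace Levenshtein

variable {α β δ : Type*} [AddZeroClass δ] [Min δ] (C : Cost α β δ)

theorem impl_cons (x : α) (xs : List α) (y : β) (d : δ) (ds : List δ) (w)
    (w' : 0 < ds.length) :
    impl C (x :: xs) y ⟨d :: ds, w⟩ =
      let ⟨r, w⟩ := impl C xs y ⟨ds, w'⟩
      ⟨min (C.delete x + r[0]) (min (C.insert y + d) (C.substitute x y + ds[0])) :: r, by simp⟩ :=
  match ds, w' with | _ :: _, _ => rfl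

theorem impl_cons_fst_zero (x : α) (xs : List α) (y : β) (d : δ) (ds : List δ) (w h)
    (w' : 0 < ds.length) :
    (impl C (x :: xs) y ⟨d :: ds, w⟩).1[0]'h =
      let ⟨r, w⟩ := impl C xs y ⟨ds, w'⟩
      min (C.delete x + r[0]) (min (C.insert y + d) (C.substitute x y + ds[0])) :=
  match ds, w' with | _ :: _, _ => rfl

theorem impl_length (xs : List α) (y : β) (d : {r : List δ // 0 < r.length})
    (w : d.1.length = xs.length + 1) : (impl C xs y d).1.length = xs.length + 1 := by
  induction xs generalizing d with
  | nil => rfl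
  | cons x xs ih =>
    match d, w with
    | ⟨d₁ :: d₂ :: ds, _⟩, w => exact congrArg (· + 1) (ih ⟨d₂ :: ds, by simp⟩ (by simpa using w))

end Levenshtein

open Levenshtein

theorem nonemptyList_ext {δ : Type*} {x y : {r : List δ // 0 < r.length}}
    (w₀ : x.1[0]'x.2 = y.1[0]'y.2) (w : x.1.tail = y.1.tail) : x = y := by
  match x, y with
  | ⟨_ :: _, _⟩, ⟨_ :: _, _⟩ => simp_all

section Recursion

variable {α β δ : Type*} [AddZeroClass δ] [Min δ] (C : Cost α β δ)

theorem suffixLevenshtein_length (xs : List α) (ys : List β) :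
    (suffixLevenshtein C xs ys).1.length = xs.length + 1 := by
  induction ys with
  | nil => induction xs <;> simp_all [suffixLevenshtein]
  | cons y ys ih => exact impl_length C xs y _ ih

theorem suffixLevenshtein_cons₁ (x : α) (xs : List α) (ys : List β) :
    suffixLevenshtein C (x :: xs) ys =
      ⟨levenshtein C (x :: xs) ys :: (suffixLevenshtein C xs ys).1, by simp⟩ := by
  induction ys with
  | nil => rfl
  | cons y ys ih =>
    refine nonemptyList_ext rfl ?_
    show (impl C (x :: xs) y (suffixLevenshtein C (x :: xs) ys)).1.tail = _
    rw [ih, impl_cons (w' := by simp [suffixLevenshtein_length])]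
    rfl

theorem levenshtein_cons_cons (x : α) (xs : List α) (y : β) (ys : List β) :
    levenshtein C (x :: xs) (y :: ys) =
      min (C.delete x + levenshtein C xs (y :: ys))
        (min (C.insert y + levenshtein C (x :: xs) ys)
          (C.substitute x y + levenshtein C xs ys)) := by
  show (impl C (x :: xs) y (suffixLevenshtein C (x :: xs) ys)).1[0]'_ = _
  simp only [suffixLevenshtein_cons₁]
  rw [impl_cons_fst_zero (w' := by simp [suffixLevenshtein_length])]
  rfl

@[simp] theorem levenshtein_nil_cons (y : β) (ys : List β) :
    levenshtein C ([] : List α) (y :: ys) = C.insert y + levenshtein C [] ys := by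
  show C.insert y + (suffixLevenshtein C [] ys).1.getLast _ =
    C.insert y + (suffixLevenshtein C [] ys).1[0]'(suffixLevenshtein C [] ys).2
  have getLast_eq_head (d : {r : List δ // 0 < r.length}) (h : d.1.length = 1) :
      d.1.getLast (List.length_pos_iff.mp d.2) = d.1[0]'d.2 := by
    simp only [List.getLast_eq_getElem, h]
  exact congrArg _ (getLast_eq_head _ (suffixLevenshtein_length C [] ys))

@[simp] theorem levenshtein_cons_nil (x : α) (xs : List α) :
    levenshtein C (x :: xs) ([] : List β) = C.delete x + levenshtein C xs [] :=
  rfl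

end Recursion

section UnitCost

variable {α : Type*} [DecidableEq α]

local notation "lev" => levenshtein (defaultCost : Cost _ _ ℕ)

@[simp] theorem defaultCost_delete (a : α) : (defaultCost : Cost α α ℕ).delete a = 1 := rfl

@[simp] theorem defaultCost_insert (a : α) : (defaultCost : Cost α α ℕ).insert a = 1 := rfl

theorem defaultCost_substitute (a b : α) :
    (defaultCost : Cost α α ℕ).substitute a b = if a = b then 0 else 1 := rfl

theorem levenshtein_nil_left (y : List α) : lev [] y = y.length := by
  induction y with
  | nil => rfl
  | cons b y ih => simp [ih, Nat.add_comm]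

theorem levenshtein_nil_right (x : List α) : lev x [] = x.length := by
  induction x with
  | nil => rfl
  | cons a x ih => simp [ih, Nat.add_comm]

theorem levenshtein_defaultCost_cons_cons (a b : α) (x y : List α) :
    lev (a :: x) (b :: y) =
      min (lev x (b :: y) + 1) (min (lev (a :: x) y + 1) (lev x y + if a = b then 0 else 1)) := by
  rw [levenshtein_cons_cons]
  simp only [defaultCost_delete, defaultCost_insert, defaultCost_substitute, Nat.add_comm]

theorem levenshtein_comm (x y : List α) : lev x y = lev y x := by
  induction x generalizing y with
  | nil => rw [levenshtein_nil_left, levenshtein_nil_right]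
  | cons a x ihx =>
    induction y with
    | nil => rw [levenshtein_nil_left, levenshtein_nil_right]
    | cons b y ihy =>
      rw [levenshtein_defaultCost_cons_cons, levenshtein_defaultCost_cons_cons, ihx, ihx, ihy]
      simp only [eq_comm (a := a)]
      omega

theorem levenshtein_cons_left_le (a : α) (x y : List α) : lev (a :: x) y ≤ lev x y + 1 := by
  cases y with
  | nil => simp [levenshtein_nil_right, Nat.add_comm]
  | cons b y => rw [levenshtein_defaultCost_cons_cons]; omega

theorem levenshtein_cons_right_le (b : α) (x y : List α) : lev x (b :: y) ≤ lev x y + 1 := by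
  rw [levenshtein_comm, levenshtein_comm x]
  exact levenshtein_cons_left_le b y x

theorem levenshtein_cons_cons_le (a b : α) (x y : List α) :
    lev (a :: x) (b :: y) ≤ lev x y + if a = b then 0 else 1 := by
  rw [levenshtein_defaultCost_cons_cons]; omega

theorem levenshtein_cons_cons_le_add_one (a b : α) (x y : List α) :
    lev (a :: x) (b :: y) ≤ lev x y + 1 := by
  grind [levenshtein_cons_cons_le]

theorem levenshtein_le_cons_left (a : α) (x y : List α) : lev x y ≤ lev (a :: x) y + 1 := by
  induction y with
  | nil => simp [levenshtein_nil_right]; omega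
  | cons b y ih =>
    have := levenshtein_cons_right_le b x y
    rw [levenshtein_defaultCost_cons_cons]
    omega

theorem levenshtein_le_cons_right (b : α) (x y : List α) : lev x y ≤ lev x (b :: y) + 1 := by
  rw [levenshtein_comm, levenshtein_comm x]
  exact levenshtein_le_cons_left b y x

@[simp] theorem levenshtein_cons_cons_self (a : α) (x y : List α) :
    lev (a :: x) (a :: y) = lev x y := by
  have := levenshtein_le_cons_left a x y
  have := levenshtein_le_cons_right a x y
  rw [levenshtein_defaultCost_cons_cons, if_pos rfl]
  omega

end UnitCost

section Interleave

variable {α : Type*}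

def interleave (c : α) (x : List α) : List α := x.flatMap fun a => [a, c]

@[simp] theorem interleave_nil (c : α) : interleave c [] = [] := rfl

@[simp] theorem interleave_cons (c a : α) (x : List α) :
    interleave c (a :: x) = a :: c :: interleave c x := rfl

theorem length_interleave (c : α) (x : List α) : (interleave c x).length = 2 * x.length := by
  induction x with
  | nil => rfl
  | cons a x ih => simp [ih]; omega

variable [DecidableEq α]

local notation "lev" => levenshtein (defaultCost : Cost _ _ ℕ)

-- The weights make each inequality at a given total length depend on the first one at the
-- same total length and on all three at smaller ones.
mutual

theorem levenshtein_le_interleave (c : α) (x y : List α) :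
    lev x y ≤ lev (interleave c x) (interleave c y) :=
  match x, y with
  | [], y => by
    rw [interleave_nil, levenshtein_nil_left, levenshtein_nil_left, length_interleave]; omega
  | a :: x, [] => by
    rw [interleave_nil, levenshtein_nil_right, levenshtein_nil_right, length_interleave]; omega
  | a :: x, b :: y => by
    have h₁ := levenshtein_le_cons_interleave_left c x (b :: y)
    have h₂ := levenshtein_le_cons_interleave_left c y (a :: x)
    have h₃ := levenshtein_le_interleave c x y
    rw [levenshtein_comm y, levenshtein_comm (c :: _)] at h₂
    simp only [interleave_cons] at h₁ h₂ ⊢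
    have := levenshtein_cons_left_le a x (b :: y)
    have := levenshtein_cons_right_le b (a :: x) y
    have := levenshtein_cons_cons_le a b x y
    rw [levenshtein_defaultCost_cons_cons a b (c :: _), levenshtein_cons_cons_self]
    omega
termination_by 2 * (x.length + y.length)

theorem levenshtein_le_cons_interleave_left (c : α) (x y : List α) :
    lev x y ≤ lev (c :: interleave c x) (interleave c y) :=
  match y with
  | [] => by
    rw [interleave_nil, levenshtein_nil_right, levenshtein_nil_right, List.length_cons,
      length_interleave]; omega
  | b :: y => by
    have h₁ := levenshtein_le_interleave c x (b :: y)
    have h₂ := levenshtein_le_interleave c x y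
    simp only [interleave_cons] at h₁ ⊢
    rw [levenshtein_defaultCost_cons_cons c b (interleave c x), levenshtein_cons_cons_self]
    have := levenshtein_cons_right_le b x y
    rcases eq_or_ne c b with rfl | hcb
    · have h₃ := levenshtein_cons_le_cons_interleave_left c y x
      rw [levenshtein_comm, levenshtein_comm (c :: _)] at h₃
      rw [if_pos rfl]
      omega
    · have h₃ := levenshtein_le_cons_interleave_left c y x
      rw [levenshtein_comm, levenshtein_comm (c :: _)] at h₃
      rw [if_neg hcb]
      omega
termination_by 2 * (x.length + y.length) + 1

theorem levenshtein_cons_le_cons_interleave_left (c : α) (x y : List α) :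
    lev (c :: x) y ≤ lev (c :: interleave c x) (interleave c y) :=
  match y with
  | [] => by
    rw [interleave_nil, levenshtein_nil_right, levenshtein_nil_right, List.length_cons,
      List.length_cons, length_interleave]; omega
  | b :: y => by
    have h₁ := levenshtein_le_interleave c x (b :: y)
    have h₂ := levenshtein_le_interleave c x y
    have h₃ := levenshtein_le_cons_interleave_left c y x
    rw [levenshtein_comm, levenshtein_comm (c :: _)] at h₃
    simp only [interleave_cons] at h₁ ⊢
    rw [levenshtein_defaultCost_cons_cons c b (interleave c x), levenshtein_cons_cons_self]
    have := levenshtein_cons_left_le c x (b :: y)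
    have := levenshtein_cons_cons_le c b x y
    have := levenshtein_cons_cons_le_add_one c b x y
    omega
termination_by 2 * (x.length + y.length) + 1

end

end Interleave

/-- Interleaving a `1` after every symbol does not decrease the Levenshtein edit
distance between binary strings (used in Lemma 4.1 to ensure every interval of
each codeword contains at least half `1`s). -/
theorem stmt_14 (x y : List Bool) :
    levenshtein Levenshtein.defaultCost x y
      ≤ levenshtein Levenshtein.defaultCost
          (x.flatMap (fun a => [a, true])) (y.flatMap (fun a => [a, true])) :=
  levenshtein_le_interleave true x y
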